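/- arXiv:1605.08632 — 5 statements merged into one kernel-verified Lean document; each statement's English description precedes it below -/
import Mathlib

section
/- Let x : ℝ → ℝ satisfy x(t) decaying as x'(t) = -0.2·x(t) on intervals between positive integers, with jumps x(k) = 2·x(k⁻) at odd positive integers k and x(k) = 0.6·x(k⁻) at even positive integers k, and x(0) = x₀ ≥ 0. Then x(t) → 0 as t → ∞. -/
/-!
Between consecutive integers the solution is `x k * exp (-0.2 * (t - k))`, so it never exceeds
its value at the last integer in absolute value, and `x (k + 1) = J (k + 1) * exp (-0.2) * x k`
with jump factor `J`. Over two steps one jump is `2` and the other `0.6`, so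
`x (k + 2) = 1.2 * exp (-0.4) * x k`, and `1.2 < 1.4 ≤ exp 0.4` makes this factor less than `1`.
-/

open Filter Set Real Topology

section LinearODE

variable {x : ℝ → ℝ} {c a b : ℝ}

theorem eq_mul_exp_of_hasDerivAt (hcont : ContinuousOn x (Ico a b))
    (hode : ∀ t ∈ Ioo a b, HasDerivAt x (c * x t) t) {t : ℝ} (ht : t ∈ Ico a b) :
    x t = x a * exp (c * (t - a)) := by
  rcases ht.1.eq_or_lt with rfl | hat
  · simp
  -- `x s * exp (-c * s)` has zero derivative, so the mean value theorem makes it constant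
  set g : ℝ → ℝ := fun s => x s * exp (-c * s)
  have hg : ∀ s ∈ Ioo a t, HasDerivAt g 0 s := fun s hs => by
    have hexp : HasDerivAt (fun s => exp (-c * s)) (exp (-c * s) * -c) s := by
      simpa using ((hasDerivAt_id s).const_mul (-c)).exp
    exact ((hode s ⟨hs.1, hs.2.trans ht.2⟩).mul hexp).congr_deriv (by ring)
  have hgc : ContinuousOn g (Icc a t) :=
    (hcont.mono (Icc_subset_Ico_right ht.2)).mul (by fun_prop)
  obtain ⟨s, -, hs⟩ := exists_hasDerivAt_eq_slope g (fun _ => 0) hat hgc hg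
  have hgt : x t * exp (-c * t) = x a * exp (-c * a) := by
    rw [eq_comm, div_eq_zero_iff, sub_eq_zero] at hs
    exact hs.resolve_right (sub_ne_zero.2 hat.ne')
  calc x t = x t * exp (-c * t) * exp (c * t) := by
        rw [mul_assoc, ← exp_add]; simp
    _ = x a * exp (c * (t - a)) := by
        rw [hgt, mul_assoc, ← exp_add]; ring_nf

theorem tendsto_nhdsLT_of_hasDerivAt (hab : a < b) (hcont : ContinuousOn x (Ico a b))
    (hode : ∀ t ∈ Ioo a b, HasDerivAt x (c * x t) t) :
    Tendsto x (𝓝[<] b) (𝓝 (x a * exp (c * (b - a)))) := by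
  have hlim : Tendsto (fun t => x a * exp (c * (t - a))) (𝓝[<] b)
      (𝓝 (x a * exp (c * (b - a)))) :=
    ((Continuous.tendsto (by fun_prop) b).mono_left nhdsWithin_le_nhds)
  refine hlim.congr' ?_
  filter_upwards [Ioo_mem_nhdsLT hab] with t ht
  exact (eq_mul_exp_of_hasDerivAt hcont hode (Ioo_subset_Ico_self ht)).symm

end LinearODE

section TwoStepRecurrence

variable {u : ℕ → ℝ} {r : ℝ}

theorem abs_le_mul_pow_of_add_two_eq_mul (hu : ∀ n, u (n + 2) = r * u n) :
    ∀ n, |u n| ≤ max |u 0| |u 1| * |r| ^ (n / 2)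
  | 0 => by simp
  | 1 => by simp
  | n + 2 => by
    rw [hu, abs_mul, show (n + 2) / 2 = n / 2 + 1 by omega, pow_succ']
    calc |r| * |u n| ≤ |r| * (max |u 0| |u 1| * |r| ^ (n / 2)) := by
          gcongr; exact abs_le_mul_pow_of_add_two_eq_mul hu n
      _ = _ := by ring

theorem tendsto_zero_of_add_two_eq_mul (hr : |r| < 1) (hu : ∀ n, u (n + 2) = r * u n) :
    Tendsto u atTop (𝓝 0) := by
  have hpow := (tendsto_pow_atTop_nhds_zero_of_lt_one (abs_nonneg r) hr).comp
    (Nat.tendsto_div_const_atTop two_ne_zero)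
  refine squeeze_zero_norm (abs_le_mul_pow_of_add_two_eq_mul hu) ?_
  simpa using hpow.const_mul (max |u 0| |u 1|)

end TwoStepRecurrence

theorem ite_odd_mul_ite_odd_succ (k : ℕ) :
    (if Odd k then (2 : ℝ) else 0.6) * (if Odd (k + 1) then 2 else 0.6) = 1.2 := by
  rcases Nat.even_or_odd k with hk | hk
  · simp [hk, Nat.not_odd_iff_even.2 hk]; norm_num
  · simp [hk, Nat.odd_add_one]; norm_num

theorem stmt0_general (x : ℝ → ℝ)
    (hcont : ∀ k : ℕ, ContinuousOn x (Set.Ico (k : ℝ) (k + 1)))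
    (hode : ∀ t : ℝ, 0 < t → (∀ k : ℕ, t ≠ (k : ℝ)) →
      HasDerivAt x (-(0.2) * x t) t)
    (hjump : ∀ k : ℕ, 0 < k → ∃ L : ℝ,
      Tendsto x (nhdsWithin (k : ℝ) (Set.Iio (k : ℝ))) (nhds L) ∧
      x (k : ℝ) = (if Odd k then (2 : ℝ) else 0.6) * L) :
    Tendsto x atTop (nhds 0) := by
  have hode_Ioo (k : ℕ) : ∀ t ∈ Ioo (k : ℝ) (k + 1), HasDerivAt x (-(0.2) * x t) t := by
    refine fun t ht => hode t ((Nat.cast_nonneg k).trans_lt ht.1) fun n hn => ?_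
    have h₁ : k < n := by exact_mod_cast hn ▸ ht.1
    have h₂ : n < k + 1 := by exact_mod_cast hn ▸ ht.2
    omega
  have hstep (k : ℕ) :
      x (k + 1 : ℕ) = (if Odd (k + 1) then (2 : ℝ) else 0.6) * (x k * exp (-(0.2))) := by
    obtain ⟨L, hL, hxL⟩ := hjump (k + 1) k.succ_pos
    have hlim := tendsto_nhdsLT_of_hasDerivAt (lt_add_one (k : ℝ)) (hcont k) (hode_Ioo k)
    push_cast at hL hxL ⊢
    rw [hxL, tendsto_nhds_unique hL (by simpa using hlim)]
  have hrate : |1.2 * exp (-0.4)| < 1 := by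
    rw [abs_of_pos (by positivity), exp_neg, ← div_eq_mul_inv, div_lt_one (exp_pos _)]
    linarith [add_one_le_exp (0.4 : ℝ)]
  have hnat : Tendsto (fun n : ℕ => x n) atTop (𝓝 0) := by
    refine tendsto_zero_of_add_two_eq_mul hrate fun k => ?_
    calc x (k + 1 + 1 : ℕ)
        = ((if Odd (k + 1) then (2 : ℝ) else 0.6) * (if Odd (k + 1 + 1) then 2 else 0.6))
            * (exp (-(0.2)) * exp (-(0.2))) * x k := by
          rw [hstep (k + 1), hstep k]; ring
      _ = 1.2 * exp (-0.4) * x k := by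
          rw [ite_odd_mul_ite_odd_succ, ← exp_add]; norm_num
  refine squeeze_zero_norm' ?_
    ((tendsto_zero_iff_norm_tendsto_zero.1 hnat).comp tendsto_nat_floor_atTop)
  filter_upwards [eventually_ge_atTop 0] with t ht
  have hfloor : t ∈ Ico (⌊t⌋₊ : ℝ) (⌊t⌋₊ + 1) := ⟨Nat.floor_le ht, Nat.lt_floor_add_one t⟩
  calc ‖x t‖ = ‖x ⌊t⌋₊‖ * exp (-0.2 * (t - ⌊t⌋₊)) := by
        rw [eq_mul_exp_of_hasDerivAt (hcont _) (hode_Ioo _) hfloor, norm_mul,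
          norm_of_nonneg (exp_pos _).le]
    _ ≤ ‖x ⌊t⌋₊‖ :=
        mul_le_of_le_one_right (norm_nonneg _) (exp_le_one_iff.2 (by nlinarith [hfloor.1]))

/-- Example 1: impulsive decay with jump factor 2 at odd positive integers and 0.6 at
even positive integers; the solution tends to 0. -/
theorem stmt0 (x : ℝ → ℝ) (x₀ : ℝ)
    (hx0 : x 0 = x₀) (hx0nn : 0 ≤ x₀)
    (hcont : ∀ k : ℕ, ContinuousOn x (Set.Ico (k : ℝ) (k + 1)))
    (hode : ∀ t : ℝ, 0 < t → (∀ k : ℕ, t ≠ (k : ℝ)) →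
      HasDerivAt x (-(0.2) * x t) t)
    (hjump : ∀ k : ℕ, 0 < k → ∃ L : ℝ,
      Tendsto x (nhdsWithin (k : ℝ) (Set.Iio (k : ℝ))) (nhds L) ∧
      x (k : ℝ) = (if Odd k then (2 : ℝ) else 0.6) * L) :
    Tendsto x atTop (nhds 0) :=
  stmt0_general x hcont hode hjump
end

section
/- Let v : [t₀,∞) → ℝ≥0 be absolutely continuous on each interval between impulse times, satisfy v'(t) ≤ -c·v(t) almost everywhere between impulses, and satisfy v(τ) ≤ e^{-d_i}·v(τ⁻) at each impulse time τ of the i-th sequence (sequences pairwise disjoint, each strictly increasing with no finite accumulation point). Then for all t ≥ s ≥ t₀, v(t) ≤ v(s)·exp(-c(t-s) - ∑_{i=1}^p d_i·N_i(t,s)), where N_i(t,s) counts impulse times of sequence i in (s,t]. -/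
/-!
Let `D y = ∑ i, d i * Nᵢ(y, s)` (`jumpExponent T d s y`) and `w y = v y * exp (c * y + D y)`.
Since each sequence tends to `+∞`, impulse times are isolated, so `D` is locally constant away
from them and right-continuous everywhere. Between impulses `w' = (v' + c v) e^{c y + D y} ≤ 0`;
at an impulse of the `i`-th sequence `D` jumps up by exactly `d i`, which cancels the factor
`e^{-d i}`, so the left limit of `w` dominates its value. A right-continuous function that is
nonincreasing between finitely many points and only jumps down at them is nonincreasing, so
`w t ≤ w s`, which is the claim.
-/

open Filter Set Topology Real Function

theorem le_of_hasDerivAt_nonpos {f : ℝ → ℝ} {a b : ℝ} (hab : a ≤ b)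
    (ha : ContinuousWithinAt f (Ici a) a)
    (hderiv : ∀ x ∈ Ioc a b, ∃ f', HasDerivAt f f' x ∧ f' ≤ 0) : f b ≤ f a := by
  choose! f' hf' hf'_nonpos using hderiv
  have hcont : ContinuousOn f (Icc a b) := by
    intro x hx
    rcases hx.1.eq_or_lt with rfl | hax
    · exact ha.mono Icc_subset_Ici_self
    · exact (hf' x ⟨hax, hx.2⟩).continuousAt.continuousWithinAt
  have hint : interior (Icc a b) ⊆ Ioc a b := interior_Icc.trans_subset Ioo_subset_Ioc_self
  refine antitoneOn_of_hasDerivWithinAt_nonpos (convex_Icc a b) hcont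
    (fun x hx => (hf' x (hint hx)).hasDerivWithinAt) (fun x hx => hf'_nonpos x (hint hx))
    (left_mem_Icc.2 hab) (right_mem_Icc.2 hab) hab

theorem le_of_hasDerivAt_nonpos_of_finite_jumps {f : ℝ → ℝ} {a : ℝ} {S : Set ℝ} (hS : S.Finite)
    (ha : ContinuousWithinAt f (Ici a) a)
    (hright : ∀ x ∈ S, ContinuousWithinAt f (Ici x) x)
    (hjump : ∀ x ∈ S, ∃ L, Tendsto f (𝓝[<] x) (𝓝 L) ∧ f x ≤ L) {b : ℝ} (hab : a ≤ b)
    (hderiv : ∀ x ∈ Ioc a b, x ∉ S → ∃ f', HasDerivAt f f' x ∧ f' ≤ 0) : f b ≤ f a := by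
  classical
  lift S to Finset ℝ using hS
  induction S using Finset.induction_on_max generalizing b with
  | empty => exact le_of_hasDerivAt_nonpos hab ha fun x hx => hderiv x hx (by simp)
  | insert τ S hlt ih =>
    -- `τ` is the last exceptional point: `f b ≤ f τ ≤ lim_{y → τ⁻} f y ≤ f a`.
    simp only [Finset.coe_insert, mem_insert_iff, forall_eq_or_imp, not_or, and_imp]
      at hright hjump hderiv
    obtain ⟨hτright, hright⟩ := hright
    obtain ⟨⟨L, hL, hτL⟩, hjump⟩ := hjump
    by_cases hτ : τ ∈ Ioc a b
    · have hbτ : f b ≤ f τ := le_of_hasDerivAt_nonpos hτ.2 hτright fun x hx =>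
        hderiv x ⟨hτ.1.trans hx.1, hx.2⟩ hx.1.ne' fun hxS => (hlt x hxS).not_gt hx.1
      have hLa : L ≤ f a := by
        refine le_of_tendsto hL ?_
        filter_upwards [Ioo_mem_nhdsLT hτ.1] with y hy
        exact ih hy.1.le hright hjump fun x hx hxS =>
          hderiv x ⟨hx.1, hx.2.trans (hy.2.le.trans hτ.2)⟩ (hx.2.trans_lt hy.2).ne hxS
      linarith
    · exact ih hab hright hjump fun x hx hxS => hderiv x hx (fun h => hτ (h ▸ hx)) hxS

namespace Northcott

variable {κ : Type*} {g : κ → ℝ} [Northcott g]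

theorem eventually_notMem_range_nhdsNE (x : ℝ) : ∀ᶠ y in 𝓝[≠] x, y ∉ range g := by
  have hF : (g '' {k | g k ≤ x + 1} \ {x}).Finite := ((finite_le (x + 1)).image g).sdiff
  filter_upwards [self_mem_nhdsWithin,
    nhdsWithin_le_nhds (hF.isClosed.compl_mem_nhds (by simp)),
    nhdsWithin_le_nhds (Iio_mem_nhds (lt_add_one x))] with y hyx hyF hy
  rintro ⟨k, rfl⟩
  exact hyF ⟨⟨k, show g k ≤ x + 1 from hy.le, rfl⟩, hyx⟩

theorem eventually_ncard_preimage_Ioc_eq_nhdsGE (s x : ℝ) :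
    ∀ᶠ y in 𝓝[≥] x, (g ⁻¹' Ioc s y).ncard = (g ⁻¹' Ioc s x).ncard := by
  obtain ⟨u, hxu, hu⟩ := mem_nhdsGT_iff_exists_Ioo_subset.mp
    (nhdsWithin_mono x (fun y hy => ne_of_gt hy) (eventually_notMem_range_nhdsNE (g := g) x))
  filter_upwards [Ico_mem_nhdsGE hxu] with y hy
  congr 1
  ext k
  exact ⟨fun hk => ⟨hk.1, not_lt.1 fun hkx => hu ⟨hkx, hk.2.trans_lt hy.2⟩ (mem_range_self k)⟩,
    fun hk => ⟨hk.1, hk.2.trans hy.1⟩⟩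

theorem eventually_ncard_preimage_Ioc_add_nhdsLT {s x : ℝ} (hsx : s < x) :
    ∀ᶠ y in 𝓝[<] x,
      (g ⁻¹' Ioc s y).ncard + (g ⁻¹' {x}).ncard = (g ⁻¹' Ioc s x).ncard := by
  obtain ⟨l, hlx, hl⟩ := mem_nhdsLT_iff_exists_Ioo_subset.mp
    (nhdsWithin_mono x (fun y hy => ne_of_lt hy) (eventually_notMem_range_nhdsNE (g := g) x))
  filter_upwards [Ioo_mem_nhdsLT (max_lt hsx hlx)] with y hy
  have hsplit : g ⁻¹' Ioc s x = g ⁻¹' Ioc s y ∪ g ⁻¹' {x} := by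
    ext k
    simp only [mem_union, mem_preimage, mem_Ioc, mem_singleton_iff]
    constructor
    · rintro ⟨hsk, hkx⟩
      rcases le_or_gt (g k) y with hky | hyk
      · exact .inl ⟨hsk, hky⟩
      rcases hkx.eq_or_lt with hkx | hkx
      · exact .inr hkx
      exact absurd (mem_range_self k) (hl ⟨(le_max_right _ _).trans_lt (hy.1.trans hyk), hkx⟩)
    · rintro (⟨hsk, hky⟩ | hkx)
      · exact ⟨hsk, hky.trans hy.2.le⟩
      · exact ⟨hkx ▸ hsx, hkx.le⟩
  have hdisj : Disjoint (g ⁻¹' Ioc s y) (g ⁻¹' {x}) :=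
    disjoint_left.2 fun k hk hkx => (hk.2.trans_lt hy.2).ne hkx
  rw [hsplit, ncard_union_eq hdisj ((finite_le y).subset fun k hk => hk.2)
    ((finite_le x).subset fun k hk => le_of_eq hk)]

end Northcott

section JumpExponent

variable {ι κ : Type*} [Fintype ι] {T : ι → κ → ℝ} (d : ι → ℝ) (s : ℝ)

noncomputable def jumpExponent (T : ι → κ → ℝ) (d : ι → ℝ) (s y : ℝ) : ℝ :=
  ∑ i, d i * ((T i ⁻¹' Ioc s y).ncard : ℝ)

theorem jumpExponent_self : jumpExponent T d s s = 0 := by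
  simp [jumpExponent]

variable [∀ i, Northcott (T i)]

theorem finite_Ioc_inter_iUnion_range (t : ℝ) : (Ioc s t ∩ ⋃ i, range (T i)).Finite := by
  refine (finite_iUnion fun i => (Northcott.finite_le (h := T i) t).image (T i)).subset ?_
  rintro x ⟨hx, hxT⟩
  obtain ⟨i, k, rfl⟩ := mem_iUnion.1 hxT
  exact mem_iUnion.2 ⟨i, k, hx.2, rfl⟩

theorem eventually_jumpExponent_eq_nhdsGE (x : ℝ) :
    ∀ᶠ y in 𝓝[≥] x, jumpExponent T d s y = jumpExponent T d s x := by
  filter_upwards [eventually_all.2 fun i =>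
    Northcott.eventually_ncard_preimage_Ioc_eq_nhdsGE (g := T i) s x] with y hy
  simp only [jumpExponent, hy]

theorem eventually_jumpExponent_add_nhdsLT {x : ℝ} (hsx : s < x) :
    ∀ᶠ y in 𝓝[<] x, jumpExponent T d s y + ∑ i, d i * ((T i ⁻¹' {x}).ncard : ℝ) =
      jumpExponent T d s x := by
  filter_upwards [eventually_all.2 fun i =>
    Northcott.eventually_ncard_preimage_Ioc_add_nhdsLT (g := T i) hsx] with y hy
  simp only [jumpExponent, ← Finset.sum_add_distrib, ← mul_add, ← Nat.cast_add, hy]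

theorem eventually_jumpExponent_eq_nhds {x : ℝ} (hsx : s < x) (hx : ∀ i, x ∉ range (T i)) :
    ∀ᶠ y in 𝓝 x, jumpExponent T d s y = jumpExponent T d s x := by
  rw [← nhdsLT_sup_nhdsGE, eventually_sup]
  refine ⟨(eventually_jumpExponent_add_nhdsLT (T := T) d s hsx).mono fun y hy => ?_,
    eventually_jumpExponent_eq_nhdsGE (T := T) d s x⟩
  simpa [preimage_singleton_eq_empty.2 (hx _)] using hy

theorem eventually_jumpExponent_eq_sub_nhdsLT (hinj : ∀ i, Injective (T i))
    (hdisj : ∀ i j, i ≠ j → ∀ k l, T i k ≠ T j l) {i : ι} {k : κ} (hs : s < T i k) :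
    ∀ᶠ y in 𝓝[<] T i k, jumpExponent T d s y = jumpExponent T d s (T i k) - d i := by
  classical
  have hsum : ∑ j, d j * ((T j ⁻¹' {T i k}).ncard : ℝ) = d i := by
    rw [Finset.sum_eq_single i, ncard_preimage_of_injective_subset_range (hinj i) (by simp)]
    · simp
    · intro j _ hji
      rw [preimage_singleton_eq_empty.2 fun ⟨l, hl⟩ => hdisj j i hji l k hl]
      simp
    · simp
  filter_upwards [eventually_jumpExponent_add_nhdsLT (T := T) d s hs] with y hy
  rw [← hy, hsum]
  ring

end JumpExponent

section ExpWeight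

variable {v D : ℝ → ℝ} {c x : ℝ}

theorem ContinuousWithinAt.mul_exp_of_eventually_eq (hv : ContinuousWithinAt v (Ici x) x)
    (hD : ∀ᶠ y in 𝓝[≥] x, D y = D x) :
    ContinuousWithinAt (fun y => v y * exp (c * y + D y)) (Ici x) x := by
  have hconst : ContinuousWithinAt (fun y => v y * exp (c * y + D x)) (Ici x) x :=
    hv.mul (by fun_prop)
  exact hconst.congr_of_eventuallyEq (hD.mono fun y hy => by simp [hy]) rfl

theorem exists_hasDerivAt_mul_exp_nonpos {v' : ℝ} (hv : HasDerivAt v v' x)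
    (hv' : v' ≤ -c * v x) (hD : ∀ᶠ y in 𝓝 x, D y = D x) :
    ∃ w', HasDerivAt (fun y => v y * exp (c * y + D y)) w' x ∧ w' ≤ 0 := by
  have he : HasDerivAt (fun y => exp (c * y + D x)) (exp (c * x + D x) * c) x := by
    simpa using (((hasDerivAt_id x).const_mul c).add_const (D x)).exp
  refine ⟨_, (hv.mul he).congr_of_eventuallyEq (hD.mono fun y hy => by simp [hy]), ?_⟩
  have := mul_le_mul_of_nonneg_right hv' (exp_pos (c * x + D x)).le
  linarith

theorem exists_tendsto_nhdsLT_mul_exp_ge {L δ : ℝ} (hv : Tendsto v (𝓝[<] x) (𝓝 L))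
    (hjump : v x ≤ exp (-δ) * L) (hD : ∀ᶠ y in 𝓝[<] x, D y = D x - δ) :
    ∃ L', Tendsto (fun y => v y * exp (c * y + D y)) (𝓝[<] x) (𝓝 L') ∧
      v x * exp (c * x + D x) ≤ L' := by
  have hexp : Tendsto (fun y => exp (c * y + (D x - δ))) (𝓝[<] x)
      (𝓝 (exp (c * x + (D x - δ)))) :=
    ((by fun_prop : Continuous fun y => exp (c * y + (D x - δ))).tendsto x).mono_left
      nhdsWithin_le_nhds
  refine ⟨_, (hv.mul hexp).congr' (hD.mono fun y hy => by simp [hy]), ?_⟩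
  calc v x * exp (c * x + D x) ≤ exp (-δ) * L * exp (c * x + D x) := by gcongr
    _ = L * exp (c * x + (D x - δ)) := by
      rw [mul_comm (exp _) L, mul_assoc, ← exp_add]
      ring_nf

end ExpWeight

theorem stmt3_general (p : ℕ) (c : ℝ) (d : Fin p → ℝ) (t₀ : ℝ)
    (T : Fin p → ℕ → ℝ)
    (hTmono : ∀ i, StrictMono (T i))
    (hTdisj : ∀ i j, i ≠ j → ∀ k l, T i k ≠ T j l)
    (hTtop : ∀ i, Tendsto (T i) atTop atTop)
    (v : ℝ → ℝ)
    (hright : ∀ t : ℝ, t₀ ≤ t → ContinuousWithinAt v (Set.Ici t) t)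
    (hflow : ∀ t : ℝ, t₀ < t → (∀ i k, t ≠ T i k) →
      ∃ v' : ℝ, HasDerivAt v v' t ∧ v' ≤ -c * v t)
    (hjump : ∀ i k, ∃ L : ℝ,
      Tendsto v (nhdsWithin (T i k) (Set.Iio (T i k))) (nhds L) ∧
      v (T i k) ≤ Real.exp (-(d i)) * L) :
    ∀ s t : ℝ, t₀ ≤ s → s ≤ t →
      v t ≤ v s * Real.exp (-c * (t - s)
        - ∑ i, d i * (({k : ℕ | T i k ∈ Set.Ioc s t}.ncard : ℝ))) := by
  intro s t hs hst
  have hNorthcott : ∀ i, Northcott (T i) := fun i =>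
    (northcott_iff_tendsto _).2 (Nat.cofinite_eq_atTop ▸ hTtop i)
  set D := jumpExponent T d s
  have hw : v t * exp (c * t + D t) ≤ v s * exp (c * s + D s) :=
    le_of_hasDerivAt_nonpos_of_finite_jumps (f := fun y => v y * exp (c * y + D y))
      (finite_Ioc_inter_iUnion_range (T := T) s t)
      ((hright s hs).mul_exp_of_eventually_eq (eventually_jumpExponent_eq_nhdsGE d s s))
      (fun x hx => (hright x (hs.trans hx.1.1.le)).mul_exp_of_eventually_eq
        (eventually_jumpExponent_eq_nhdsGE d s x))
      (fun x ⟨hx, hxT⟩ => by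
        obtain ⟨i, k, rfl⟩ := mem_iUnion.1 hxT
        obtain ⟨L, hL, hvL⟩ := hjump i k
        exact exists_tendsto_nhdsLT_mul_exp_ge hL hvL (eventually_jumpExponent_eq_sub_nhdsLT d s
          (fun i => (hTmono i).injective) hTdisj hx.1))
      hst
      (fun x hx hxS => by
        have hxT : ∀ i, x ∉ range (T i) := fun i hxi => hxS ⟨hx, mem_iUnion.2 ⟨i, hxi⟩⟩
        obtain ⟨v', hv', hv'c⟩ := hflow x (hs.trans_lt hx.1) fun i k hxk => hxT i ⟨k, hxk.symm⟩
        exact exists_hasDerivAt_mul_exp_nonpos hv' hv'c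
          (eventually_jumpExponent_eq_nhds d s hx.1 hxT))
  rw [show D s = 0 from jumpExponent_self d s, add_zero] at hw
  show v t ≤ v s * exp (-c * (t - s) - D t)
  calc v t = v t * exp (c * t + D t) * exp (-(c * t + D t)) := by
        rw [mul_assoc, ← exp_add]; simp
    _ ≤ v s * exp (c * s) * exp (-(c * t + D t)) := by gcongr
    _ = v s * exp (-c * (t - s) - D t) := by
        rw [mul_assoc, ← exp_add]; ring_nf

/-- Per-interval decay estimate for a candidate exponential ISS-Lyapunov function:
flow decay at rate `c` between impulses and multiplicative factors `e^{-dᵢ}` at impulses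
of the `i`-th sequence compose to the stated bound, where `Nᵢ(t,s)` counts impulse times
of sequence `i` in `(s,t]`. -/
theorem stmt3 (p : ℕ) (c : ℝ) (d : Fin p → ℝ) (t₀ : ℝ)
    (T : Fin p → ℕ → ℝ)
    (hTmono : ∀ i, StrictMono (T i))
    (hTgt : ∀ i k, t₀ < T i k)
    (hTdisj : ∀ i j, i ≠ j → ∀ k l, T i k ≠ T j l)
    (hTtop : ∀ i, Tendsto (T i) atTop atTop)
    (v : ℝ → ℝ) (hvnn : ∀ t, 0 ≤ v t)
    (hright : ∀ t : ℝ, t₀ ≤ t → ContinuousWithinAt v (Set.Ici t) t)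
    (hcont : ∀ t : ℝ, t₀ < t → (∀ i k, t ≠ T i k) → ContinuousAt v t)
    (hflow : ∀ t : ℝ, t₀ < t → (∀ i k, t ≠ T i k) →
      ∃ v' : ℝ, HasDerivAt v v' t ∧ v' ≤ -c * v t)
    (hjump : ∀ i k, ∃ L : ℝ,
      Tendsto v (nhdsWithin (T i k) (Set.Iio (T i k))) (nhds L) ∧
      v (T i k) ≤ Real.exp (-(d i)) * L) :
    ∀ s t : ℝ, t₀ ≤ s → s ≤ t →
      v t ≤ v s * Real.exp (-c * (t - s)
        - ∑ i, d i * (({k : ℕ | T i k ∈ Set.Ioc s t}.ncard : ℝ))) :=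
  stmt3_general p c d t₀ T hTmono hTdisj hTtop v hright hflow hjump
end

section
/- Let T₁ = {1,3,5,…} and T₂ = {2,4,6,…}. For c = 0.2, d₁ = -ln 2, d₂ = -ln 0.6, λ = 0.1, μ = ln 2, the dwell-time condition -d₁·N₁(t,s) - d₂·N₂(t,s) - (c-λ)(t-s) ≤ μ holds for all real t ≥ s ≥ 0, where N_i(t,s) is the number of elements of T_i in (s,t]. -/
/-!
On `(s, t]` the odd (gain `ln 2`) and even (gain `ln 0.6`) impulse times alternate, so there
is at most one more odd than even time, and together they number at most `t - s + 1`.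
Pairing each odd time with an even one costs `ln 2 + ln 0.6 - 2λ = ln 1.2 - 0.2 ≤ 0`, and the
one unpaired odd time costs `ln 2 - λ` plus the slack `λ` of the counting bound, i.e. exactly
`μ = ln 2`.
-/

open Set

open scoped Finset

lemma Nat.card_filter_even_Ioc {a b : ℕ} (hab : a ≤ b) :
    #{n ∈ Finset.Ioc a b | Even n} = b / 2 - a / 2 := by
  have hsplit : Finset.Ioc 0 b = Finset.Ioc 0 a ∪ Finset.Ioc a b :=
    (Finset.Ioc_union_Ioc_eq_Ioc a.zero_le hab).symm
  have hdisj : Disjoint (Finset.Ioc 0 a) (Finset.Ioc a b) := by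
    rw [Finset.disjoint_left]; intro n h1 h2; simp only [Finset.mem_Ioc] at h1 h2; omega
  have hcount (c : ℕ) : #{n ∈ Finset.Ioc 0 c | Even n} = c / 2 := by
    simpa only [even_iff_two_dvd] using Nat.Ioc_filter_dvd_card_eq_div c 2
  have := congrArg (fun S => #{n ∈ S | Even n}) hsplit
  simp only [Finset.filter_union,
    Finset.card_union_of_disjoint (Finset.disjoint_filter_filter hdisj), hcount] at this
  omega

lemma Nat.card_filter_odd_add_card_filter_even_Ioc (a b : ℕ) :
    #{n ∈ Finset.Ioc a b | Odd n} + #{n ∈ Finset.Ioc a b | Even n} = b - a := by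
  simpa only [Nat.not_even_iff_odd, Nat.card_Ioc, add_comm] using
    Finset.card_filter_add_card_filter_not (s := Finset.Ioc a b) (fun n => Even n)

lemma Nat.card_filter_odd_Ioc_le_card_filter_even_Ioc_add_one {a b : ℕ} (hab : a ≤ b) :
    #{n ∈ Finset.Ioc a b | Odd n} ≤ #{n ∈ Finset.Ioc a b | Even n} + 1 := by
  have := Nat.card_filter_odd_add_card_filter_even_Ioc a b
  rw [Nat.card_filter_even_Ioc hab] at *
  omega

lemma setOf_nat_mem_Ioc_eq_filter {s t : ℝ} (P : ℕ → Prop) [DecidablePred P] :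
    {n : ℕ | 0 < n ∧ P n ∧ (n : ℝ) ∈ Ioc s t} = ↑{n ∈ Finset.Ioc ⌊s⌋₊ ⌊t⌋₊ | P n} := by
  ext n
  simp only [mem_ofPred_eq, Finset.coe_filter, Finset.mem_Ioc, mem_Ioc]
  constructor
  · rintro ⟨hn, hP, hs, ht⟩
    exact ⟨⟨(Nat.floor_lt' hn.ne').mpr hs, (Nat.le_floor_iff' hn.ne').mpr ht⟩, hP⟩
  · rintro ⟨⟨hs, ht⟩, hP⟩
    have hn : n ≠ 0 := by omega
    exact ⟨Nat.pos_of_ne_zero hn, hP, (Nat.floor_lt' hn).mp hs, (Nat.le_floor_iff' hn).mp ht⟩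

lemma ncard_odd_le_ncard_even_add_one {s t : ℝ} (hst : s ≤ t) :
    {n : ℕ | 0 < n ∧ Odd n ∧ (n : ℝ) ∈ Ioc s t}.ncard
      ≤ {n : ℕ | 0 < n ∧ Even n ∧ (n : ℝ) ∈ Ioc s t}.ncard + 1 := by
  simp only [setOf_nat_mem_Ioc_eq_filter, ncard_coe_finset]
  exact Nat.card_filter_odd_Ioc_le_card_filter_even_Ioc_add_one (Nat.floor_mono hst)

lemma ncard_odd_add_ncard_even_le {s t : ℝ} (ht : 0 ≤ t) (hst : s ≤ t) :
    ({n : ℕ | 0 < n ∧ Odd n ∧ (n : ℝ) ∈ Ioc s t}.ncard : ℝ)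
      + {n : ℕ | 0 < n ∧ Even n ∧ (n : ℝ) ∈ Ioc s t}.ncard ≤ t - s + 1 := by
  simp only [setOf_nat_mem_Ioc_eq_filter, ncard_coe_finset]
  rw [← Nat.cast_add, Nat.card_filter_odd_add_card_filter_even_Ioc,
    Nat.cast_sub (Nat.floor_mono hst)]
  linarith [Nat.floor_le ht, Nat.lt_floor_add_one s]

lemma alternating_dwell_time_bound {a b r N₁ N₂ τ : ℝ} (hr₀ : 0 ≤ r) (hr : r ≤ a)
    (hab : a + b ≤ 2 * r) (hN₂ : 0 ≤ N₂) (hN : N₁ ≤ N₂ + 1) (hτ : N₁ + N₂ ≤ τ + 1) :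
    a * N₁ + b * N₂ - r * τ ≤ a :=
  calc a * N₁ + b * N₂ - r * τ
      ≤ (a - r) * N₁ + (b - r) * N₂ + r := by linarith [mul_le_mul_of_nonneg_left hτ hr₀]
    _ ≤ (a - r) * (N₂ + 1) + (b - r) * N₂ + r := by gcongr
    _ = a + (a + b - 2 * r) * N₂ := by ring
    _ ≤ a := by linarith [mul_nonpos_of_nonpos_of_nonneg (sub_nonpos.mpr hab) hN₂]

lemma log_two_add_log_six_tenths_le : Real.log 2 + Real.log 0.6 ≤ 0.2 := by
  rw [← Real.log_mul two_ne_zero (by norm_num), Real.log_le_iff_le_exp (by norm_num)]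
  linarith [Real.add_one_le_exp (0.2 : ℝ)]

/-- Dwell-time condition verification for Example 1: with `c = 0.2`, `d₁ = -ln 2`,
`d₂ = -ln 0.6`, `λ = 0.1`, `μ = ln 2`, the condition holds for all `t ≥ s ≥ 0`,
where `N₁` counts odd and `N₂` even positive integers in `(s,t]`. -/
theorem stmt4 :
    ∀ s t : ℝ, 0 ≤ s → s ≤ t →
      -(-Real.log 2) * (({n : ℕ | 0 < n ∧ Odd n ∧ (n : ℝ) ∈ Set.Ioc s t}.ncard : ℝ))
      - (-Real.log 0.6) * (({n : ℕ | 0 < n ∧ Even n ∧ (n : ℝ) ∈ Set.Ioc s t}.ncard : ℝ))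
      - (0.2 - 0.1) * (t - s) ≤ Real.log 2 := by
  intro s t hs hst
  have hN : ({n : ℕ | 0 < n ∧ Odd n ∧ (n : ℝ) ∈ Ioc s t}.ncard : ℝ)
      ≤ {n : ℕ | 0 < n ∧ Even n ∧ (n : ℝ) ∈ Ioc s t}.ncard + 1 := by
    exact_mod_cast ncard_odd_le_ncard_even_add_one hst
  have hlog2 : (0.1 : ℝ) ≤ Real.log 2 := by linarith [Real.log_two_gt_d9]
  rw [neg_neg, neg_mul, sub_neg_eq_add, show (0.2 - 0.1 : ℝ) = 0.1 by norm_num]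
  exact alternating_dwell_time_bound (by norm_num) hlog2
    (by linarith [log_two_add_log_six_tenths_le])
    (Nat.cast_nonneg _) hN (ncard_odd_add_ncard_even_le (hs.trans hst) hst)
end

section
/- Suppose a,b ∈ ℝ≥0, ĥ ∈ ℝ, γ₁₂ > 0, s₁ > 0, u ≥ 0, and let V := max{a/s₁, b}. If a' ≤ max{e^{-ĥ}·a, γ₁₂·b, u} then max{a'/s₁, b} ≤ max{e^{-d}·V, u/s₁}, where d := min{ĥ, -ln(γ₁₂/s₁), -ε} for any ε > 0. -/
/-! Dividing the jump bound by `s₁`, each of its three terms is dominated by a term of the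
right-hand side once the rate `E := e^{-d}` dominates `e^{-ĥ}`, `γ₁₂/s₁` and `1`; since
`t ↦ e^{-t}` is antitone, `e^{-d}` is the maximum of `e^{-ĥ}`, `e^{ln(γ₁₂/s₁)}` and `e^{ε}`. -/

open Real

lemma Real.exp_neg_min (x y : ℝ) : exp (-min x y) = max (exp (-x)) (exp (-y)) :=
  (exp_monotone.comp_antitone fun _ _ h => neg_le_neg h).map_min

lemma max_div_le_mul_max_div {a b a' u s c g E : ℝ} (ha : 0 ≤ a) (hb : 0 ≤ b) (hs : 0 < s)
    (hc : c ≤ E) (hg : g / s ≤ E) (hE : 1 ≤ E)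
    (hjump : a' ≤ max (max (c * a) (g * b)) u) :
    max (a' / s) b ≤ max (E * max (a / s) b) (u / s) := by
  have hE₀ : 0 ≤ E := zero_le_one.trans hE
  have hV : 0 ≤ max (a / s) b := le_max_of_le_right hb
  have hca : c * (a / s) ≤ E * max (a / s) b :=
    mul_le_mul hc (le_max_left _ _) (div_nonneg ha hs.le) hE₀
  have hgb : g / s * b ≤ E * max (a / s) b := mul_le_mul hg (le_max_right _ _) hb hE₀
  have hb' : b ≤ E * max (a / s) b :=
    (le_max_right _ _).trans (le_mul_of_one_le_left hV hE)
  have ha' : a' / s ≤ max (max (c * (a / s)) (g / s * b)) (u / s) := by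
    rw [mul_div_assoc', div_mul_eq_mul_div, max_div_div_right hs.le,
      max_div_div_right hs.le]
    exact div_le_div_of_nonneg_right hjump hs.le
  exact max_le (ha'.trans (max_le_max_right _ (max_le hca hgb))) (le_max_of_le_left hb')

theorem stmt8_general (a b a' u dhat γ₁₂ s₁ ε : ℝ)
    (ha : 0 ≤ a) (hb : 0 ≤ b)
    (hs : 0 < s₁) (hε : 0 < ε)
    (hjump : a' ≤ max (max (Real.exp (-dhat) * a) (γ₁₂ * b)) u) :
    max (a' / s₁) b ≤
      max (Real.exp (-(min (min dhat (-Real.log (γ₁₂ / s₁))) (-ε))) *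
        max (a / s₁) b) (u / s₁) := by
  have hE : Real.exp (-(min (min dhat (-Real.log (γ₁₂ / s₁))) (-ε))) =
      max (max (exp (-dhat)) (exp (log (γ₁₂ / s₁)))) (exp ε) := by
    simp only [Real.exp_neg_min, neg_neg]
  rw [hE]
  exact max_div_le_mul_max_div ha hb hs (le_max_of_le_left (le_max_left _ _))
    (le_max_of_le_left (le_max_of_le_right (le_exp_log _)))
    (le_max_of_le_right (one_le_exp hε.le)) hjump

/-- Key jump estimate in the proof of Theorem 2 for the jump map `g₁`:
here `dhat` plays the role of `d̂₁` and `d := min {dhat, -ln(γ₁₂/s₁), -ε}`. -/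
theorem stmt8 (a b a' u dhat γ₁₂ s₁ ε : ℝ)
    (ha : 0 ≤ a) (hb : 0 ≤ b) (hu : 0 ≤ u)
    (hγ : 0 < γ₁₂) (hs : 0 < s₁) (hε : 0 < ε)
    (hjump : a' ≤ max (max (Real.exp (-dhat) * a) (γ₁₂ * b)) u) :
    max (a' / s₁) b ≤
      max (Real.exp (-(min (min dhat (-Real.log (γ₁₂ / s₁))) (-ε))) *
        max (a / s₁) b) (u / s₁) :=
  stmt8_general a b a' u dhat γ₁₂ s₁ ε ha hb hs hε hjump
end

section
/- Let x, y ∈ ℝ with |y| ≥ |x|. Then sign(y)·(-y·(1+e^{|y|}) + |x|·e^{|x|}) ≤ -|y| (for y ≠ 0). -/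
/-! Since `sign y * y = |y|`, the left-hand side equals `-|y| - |y| e^{|y|} + sign y · |x| e^{|x|}`;
as `sign y ≤ 1` and `s ↦ s e^s` is monotone on `[0, ∞)`, the last term is at most `|y| e^{|y|}`. -/

namespace Real

theorem sign_mul_self_eq_abs (r : ℝ) : sign r * r = |r| := by
  rcases lt_trichotomy r 0 with hr | rfl | hr
  · rw [sign_of_neg hr, abs_of_neg hr, neg_one_mul]
  · simp
  · rw [sign_of_pos hr, abs_of_pos hr, one_mul]

theorem sign_le_one (r : ℝ) : sign r ≤ 1 := by
  rcases sign_apply_eq r with h | h | h <;> rw [h] <;> norm_num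

theorem mul_exp_le_mul_exp {a b : ℝ} (ha : 0 ≤ a) (hab : a ≤ b) : a * exp a ≤ b * exp b :=
  mul_le_mul hab (exp_le_exp.2 hab) (exp_pos a).le (ha.trans hab)

end Real

open Real in
theorem stmt13_general (x y : ℝ) (hgain : |x| ≤ |y|) :
    Real.sign y * (-y * (1 + Real.exp |y|) + |x| * Real.exp |x|) ≤ -|y| :=
  calc sign y * (-y * (1 + exp |y|) + |x| * exp |x|)
      = -(sign y * y) * (1 + exp |y|) + sign y * (|x| * exp |x|) := by ring
    _ ≤ -|y| * (1 + exp |y|) + |y| * exp |y| := by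
      rw [sign_mul_self_eq_abs]
      gcongr -|y| * (1 + exp |y|) + ?_
      exact (mul_le_of_le_one_left (by positivity) (sign_le_one y)).trans
        (mul_exp_le_mul_exp (abs_nonneg x) hgain)
    _ = -|y| := by ring

/-- Lyapunov decay estimate for the second subsystem of Example 2 under the gain
condition `|y| ≥ |x|`. -/
theorem stmt13 (x y : ℝ) (hy : y ≠ 0) (hgain : |x| ≤ |y|) :
    Real.sign y * (-y * (1 + Real.exp |y|) + |x| * Real.exp |x|) ≤ -|y| :=
  stmt13_general x y hgain
end
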